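/- A quasi-metric space (X,d) has the property that every bounded ideal of (X,d) has a colimit if and only if (X,d) is local Yoneda complete, i.e., (i) whenever (x,r) is a least upper bound in BX of a directed set {(x_i,r_i)}_{i∈D} of formal balls, then r = inf_{i∈D} r_i, and (ii) BX is a local dcpo. -/

import Mathlib

open scoped ENNReal NNReal

universe u v w

/-- A quasi-metric space structure on `X`: distances valued in `[0,∞]`, with
`d x x = 0`, the triangle inequality, and separatedness. -/
structure QuasiMetric (X : Type u) where
  d : X → X → ℝ≥0∞
  d_self : ∀ x, d x x = 0
  d_triangle : ∀ x y z, d x z ≤ d x y + d y z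
  d_separated : ∀ x y, d x y = 0 → d y x = 0 → x = y

namespace QuasiMetric

variable {X : Type u}

/-- The order on formal balls: `(x, r) ⊑ (y, s)` iff `s + d x y ≤ r`
(equivalently `d x y ≤ r - s`). -/
def ballLE (q : QuasiMetric X) (p p' : X × ℝ≥0) : Prop :=
  (p'.2 : ℝ≥0∞) + q.d p.1 p'.1 ≤ (p.2 : ℝ≥0∞)

/-- `b` is a least upper bound of the set `S` of formal balls. -/
def IsBallLUB (q : QuasiMetric X) (S : Set (X × ℝ≥0)) (b : X × ℝ≥0) : Prop :=
  (∀ p ∈ S, q.ballLE p b) ∧ ∀ c, (∀ p ∈ S, q.ballLE p c) → q.ballLE b c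

/-- `le` is a directed preorder (reflexive, transitive, directed). -/
def DirectedPre {D : Type v} (le : D → D → Prop) : Prop :=
  (∀ i, le i i) ∧ (∀ i j k, le i j → le j k → le i k) ∧ ∀ i j, ∃ k, le i k ∧ le j k

/-- A net `x : D → X` is forward Cauchy: `inf_i sup_{k ≥ j ≥ i} d (x j) (x k) = 0`. -/
def ForwardCauchy (q : QuasiMetric X) {D : Type v} (le : D → D → Prop) (x : D → X) : Prop :=
  (⨅ i, ⨆ j, ⨆ (_ : le i j), ⨆ k, ⨆ (_ : le j k), q.d (x j) (x k)) = 0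

/-- `a` is a Yoneda limit of the net `x : D → X`:
for all `y`, `d a y = inf_i sup_{j ≥ i} d (x j) y`. -/
def IsYonedaLimit (q : QuasiMetric X) {D : Type v} (le : D → D → Prop) (x : D → X) (a : X) :
    Prop :=
  ∀ y, q.d a y = ⨅ i, ⨆ j, ⨆ (_ : le i j), q.d (x j) y

/-- `(X, d)` is Yoneda complete: every forward Cauchy net has a Yoneda limit. -/
def YonedaComplete (q : QuasiMetric X) : Prop :=
  ∀ (D : Type u) (le : D → D → Prop), DirectedPre le → Nonempty D →
    ∀ x : D → X, q.ForwardCauchy le x → ∃ a, q.IsYonedaLimit le x a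

/-- `(X, d)` is standard: whenever a directed set of formal balls (viewed as a monotone
net indexed by itself) has a least upper bound, the corresponding forward Cauchy net of
centers has a Yoneda limit. -/
def Standard (q : QuasiMetric X) : Prop :=
  ∀ S : Set (X × ℝ≥0), S.Nonempty → DirectedOn q.ballLE S →
    (∃ b, q.IsBallLUB S b) →
    ∃ a, q.IsYonedaLimit (fun p p' : ↥S => q.ballLE p.1 p'.1) (fun p : ↥S => p.1.1) a

/-- A weight of `(X, d)`: `φ x ≤ φ y + d x y`. -/
def IsWeight (q : QuasiMetric X) (φ : X → ℝ≥0∞) : Prop :=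
  ∀ x y, φ x ≤ φ y + q.d x y

/-- The quasi-metric on weights: `ρ(φ, ψ) = sup_y (ψ y ⊖ φ y)`. -/
noncomputable def rho {Y : Type v} (φ ψ : Y → ℝ≥0∞) : ℝ≥0∞ := ⨆ y, ψ y - φ y

/-- An ideal of `(X, d)`: a weight `φ` with `inf φ = 0` such that
`ρ(φ, min (λ, μ)) = min (ρ(φ,λ), ρ(φ,μ))` for all weights `λ`, `μ`. -/
def IsIdeal (q : QuasiMetric X) (φ : X → ℝ≥0∞) : Prop :=
  q.IsWeight φ ∧ (⨅ x, φ x) = 0 ∧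
    ∀ l m : X → ℝ≥0∞, q.IsWeight l → q.IsWeight m →
      rho φ (fun x => min (l x) (m x)) = min (rho φ l) (rho φ m)

/-- A weight `φ` is bounded: there are `r < ∞` and `a ∈ X` with `d x a ≤ r + φ x` for all `x`. -/
def BoundedWeight (q : QuasiMetric X) (φ : X → ℝ≥0∞) : Prop :=
  ∃ (r : ℝ≥0) (a : X), ∀ x, q.d x a ≤ (r : ℝ≥0∞) + φ x

/-- `b` is a colimit of the weight `φ`: for all `y`, `d b y = sup_x (d x y ⊖ φ x)`. -/
def IsColimit (q : QuasiMetric X) (φ : X → ℝ≥0∞) (b : X) : Prop :=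
  ∀ y, q.d b y = ⨆ x, q.d x y - φ x

/-- The poset of formal balls is a dcpo: every (nonempty) directed subset has a lub. -/
def BallDcpo (q : QuasiMetric X) : Prop :=
  ∀ S : Set (X × ℝ≥0), S.Nonempty → DirectedOn q.ballLE S → ∃ b, q.IsBallLUB S b

/-- The poset of formal balls is a local dcpo: every (nonempty) directed subset with an
upper bound has a lub. -/
def BallLocalDcpo (q : QuasiMetric X) : Prop :=
  ∀ S : Set (X × ℝ≥0), S.Nonempty → DirectedOn q.ballLE S →
    (∃ c, ∀ p ∈ S, q.ballLE p c) → ∃ b, q.IsBallLUB S b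

/-- `u` is way below `v` in the poset of formal balls. -/
def ballWayBelow (q : QuasiMetric X) (u v : X × ℝ≥0) : Prop :=
  ∀ S : Set (X × ℝ≥0), S.Nonempty → DirectedOn q.ballLE S →
    ∀ s, q.IsBallLUB S s → q.ballLE v s → ∃ p ∈ S, q.ballLE u p

/-- The poset of formal balls is a continuous poset: for every `p`, the set of elements
way below `p` is (nonempty) directed and has `p` as its least upper bound. -/
def BallContinuousPoset (q : QuasiMetric X) : Prop :=
  ∀ p : X × ℝ≥0,
    {u : X × ℝ≥0 | q.ballWayBelow u p}.Nonempty ∧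
    DirectedOn q.ballLE {u : X × ℝ≥0 | q.ballWayBelow u p} ∧
    q.IsBallLUB {u : X × ℝ≥0 | q.ballWayBelow u p} p

/-- A function `χ` is `𝓙`-closed: `ρ(ψ, χ) ≥ χ (colim ψ)` for every bounded ideal `ψ`
possessing a colimit. -/
def JClosed (q : QuasiMetric X) (χ : X → ℝ≥0∞) : Prop :=
  ∀ ψ : X → ℝ≥0∞, q.IsIdeal ψ → q.BoundedWeight ψ → ∀ c, q.IsColimit ψ c → χ c ≤ rho ψ χ

/-- `(X, d)` is a continuous `𝕁`-algebra: every bounded ideal has a colimit, and there is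
a map `⇓` assigning to each `x` a bounded ideal `⇓x` with `ρ(⇓x, φ) = d x (colim φ)` for
all `x` and all bounded ideals `φ`. -/
def ContinuousJAlgebra (q : QuasiMetric X) : Prop :=
  ∃ colim : (X → ℝ≥0∞) → X,
    (∀ φ, q.IsIdeal φ → q.BoundedWeight φ → q.IsColimit φ (colim φ)) ∧
    ∃ w : X → X → ℝ≥0∞,
      (∀ x, q.IsIdeal (w x) ∧ q.BoundedWeight (w x)) ∧
      ∀ (x : X) (φ : X → ℝ≥0∞), q.IsIdeal φ → q.BoundedWeight φ →
        rho (w x) φ = q.d x (colim φ)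

/-- The quasi-metric space of all functions `X → [0,∞]` satisfying a predicate `P`
(e.g. the bounded weights, or the bounded ideals), with the quasi-metric
`ρ(φ, ψ) = sup_x (ψ x ⊖ φ x)`. -/
noncomputable def weightSpace (q : QuasiMetric X) (P : (X → ℝ≥0∞) → Prop) :
    QuasiMetric {φ : X → ℝ≥0∞ // P φ} where
  d φ ψ := rho φ.1 ψ.1
  d_self φ := by simp [rho]
  d_triangle φ ψ χ := by
    refine iSup_le fun x => ?_
    calc χ.1 x - φ.1 x ≤ (χ.1 x - ψ.1 x) + (ψ.1 x - φ.1 x) := tsub_le_tsub_add_tsub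
    _ ≤ rho ψ.1 χ.1 + rho φ.1 ψ.1 :=
        add_le_add (le_iSup (fun y => χ.1 y - ψ.1 y) x) (le_iSup (fun y => ψ.1 y - φ.1 y) x)
    _ = rho φ.1 ψ.1 + rho ψ.1 χ.1 := add_comm _ _
  d_separated φ ψ h1 h2 := by
    apply Subtype.ext
    funext x
    have hx1 : ψ.1 x - φ.1 x ≤ 0 := by
      rw [← h1]; exact le_iSup (fun y => ψ.1 y - φ.1 y) x
    have hx2 : φ.1 x - ψ.1 x ≤ 0 := by
      rw [← h2]; exact le_iSup (fun y => φ.1 y - ψ.1 y) x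
    exact le_antisymm (tsub_eq_zero_iff_le.mp (le_antisymm hx2 (zero_le)))
      (tsub_eq_zero_iff_le.mp (le_antisymm hx1 (zero_le)))

end QuasiMetric


/-!
Given a directed set `S` of formal balls with an upper bound `(a, s)`, lower every radius by
`r = inf S`; the resulting family generates the weight `φ y = inf (d y x + (t - r))`. By the
Yoneda lemma `ρ(φ, χ) = sup (χ x ⊖ (t - r))` for every weight `χ`, so directedness of `S` makes
`φ` an ideal, and `a` bounds it. A colimit `b` of `φ` makes `(b, r)` the least upper bound of
`S`, which gives both (i) and (ii).

Conversely, let `φ` be an ideal bounded by `r₀` at `a`. For `c ≥ r₀` the balls `(x, t)` with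
`φ x + c < t` form a directed set (flatness of `φ` applied to the weights `(t ⊖ c) ⊖ d x ·`),
bounded above by `(a, 0)`, whose radii have infimum `c`; by (ii) and (i) it has a least upper
bound `(b_c, c)`, and `d (·, b_c) ≤ φ`. For `δ = sup_x (d x y ⊖ φ x)` the ball `(y, r₀)` is above
all balls of level `r₀ + δ`, so `d (b_{r₀}, y) ≤ d (b_{r₀}, b_{r₀+δ}) + δ = δ`, and `b_{r₀}` is a
colimit of `φ`.
-/

theorem iInf_coe_sub_iInf_eq_zero {ι : Type v} [Nonempty ι] (f : ι → ℝ≥0) :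
    ⨅ i, ((f i - ⨅ j, f j : ℝ≥0) : ℝ≥0∞) = 0 := by
  refine le_antisymm (ENNReal.le_of_forall_pos_le_add fun ε hε _ => ?_) zero_le
  obtain ⟨i, hi⟩ := exists_lt_of_ciInf_lt (lt_add_of_pos_right (⨅ j, f j) hε)
  rw [zero_add]
  exact iInf_le_of_le i (by exact_mod_cast tsub_le_iff_left.mpr hi.le)

namespace QuasiMetric

variable {X : Type u} (q : QuasiMetric X)

section FormalBalls

variable {q} {p p' : X × ℝ≥0}

theorem radius_le_of_ballLE (h : q.ballLE p p') : p'.2 ≤ p.2 := by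
  exact_mod_cast le_self_add.trans h

theorem ballLE_sub_radius {r : ℝ≥0} (hr : r ≤ p'.2) (h : q.ballLE p p') :
    q.ballLE (p.1, p.2 - r) (p'.1, p'.2 - r) := by
  change ((p'.2 - r : ℝ≥0) : ℝ≥0∞) + q.d p.1 p'.1 ≤ ((p.2 - r : ℝ≥0) : ℝ≥0∞)
  rw [ENNReal.coe_sub, ENNReal.coe_sub,
    ENNReal.sub_add_eq_add_sub (by exact_mod_cast hr) ENNReal.coe_ne_top]
  exact tsub_le_tsub_right h _

end FormalBalls

section Weights

variable {q}

theorem IsWeight.tsub_le_of_ballLE {χ : X → ℝ≥0∞} (hχ : q.IsWeight χ) {p p' : X × ℝ≥0}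
    (h : q.ballLE p p') : χ p.1 - p.2 ≤ χ p'.1 - p'.2 :=
  calc χ p.1 - p.2 ≤ (χ p'.1 + q.d p.1 p'.1) - (p'.2 + q.d p.1 p'.1) := tsub_le_tsub (hχ _ _) h
    _ ≤ χ p'.1 - p'.2 := add_tsub_add_le_tsub_right

theorem IsWeight.min {l m : X → ℝ≥0∞} (hl : q.IsWeight l) (hm : q.IsWeight m) :
    q.IsWeight fun x => min (l x) (m x) := fun x y => by
  rw [← min_add_add_right]
  exact min_le_min (hl x y) (hm x y)

variable (q)

theorem isWeight_dist_left (y : X) : q.IsWeight fun z => q.d z y := fun x z => by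
  rw [add_comm]
  exact q.d_triangle x z y

theorem isWeight_tsub_dist (a : X) (C : ℝ≥0∞) : q.IsWeight fun z => C - q.d a z := fun z z' =>
  calc C - q.d a z ≤ C - q.d a z' + (q.d a z' - q.d a z) := tsub_le_tsub_add_tsub
    _ ≤ C - q.d a z' + q.d z z' := by
      gcongr
      exact tsub_le_iff_left.mpr (q.d_triangle a z z')

end Weights

noncomputable def ballWeight {ι : Type v} (f : ι → X × ℝ≥0) (y : X) : ℝ≥0∞ :=
  ⨅ i, q.d y (f i).1 + (f i).2

section BallWeight

variable {q} {ι : Type v} {f : ι → X × ℝ≥0}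

theorem ballWeight_le (i : ι) : q.ballWeight f (f i).1 ≤ (f i).2 :=
  iInf_le_of_le i (by rw [q.d_self, zero_add])

theorem isWeight_ballWeight : q.IsWeight (q.ballWeight f) := fun x y => by
  simp only [ballWeight]
  rw [ENNReal.iInf_add]
  refine le_iInf fun i => iInf_le_of_le i ?_
  calc q.d x (f i).1 + (f i).2 ≤ q.d y (f i).1 + q.d x y + (f i).2 := by
        gcongr
        rw [add_comm]
        exact q.d_triangle _ _ _
    _ = q.d y (f i).1 + (f i).2 + q.d x y := add_right_comm _ _ _

/-- Yoneda lemma for the weight generated by a family of formal balls. -/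
theorem rho_ballWeight {χ : X → ℝ≥0∞} (hχ : q.IsWeight χ) :
    rho (q.ballWeight f) χ = ⨆ i, χ (f i).1 - (f i).2 := by
  simp only [rho, ballWeight, ENNReal.sub_iInf]
  rw [iSup_comm]
  refine le_antisymm (iSup_mono fun i => iSup_le fun y => ?_) (iSup_mono fun i => ?_)
  · calc χ y - (q.d y (f i).1 + (f i).2)
          ≤ (χ (f i).1 + q.d y (f i).1) - ((f i).2 + q.d y (f i).1) := by
          rw [add_comm (q.d y _)]
          exact tsub_le_tsub_right (hχ _ _) _
      _ ≤ χ (f i).1 - (f i).2 := add_tsub_add_le_tsub_right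
  · exact le_iSup_of_le (f i).1 (by rw [q.d_self, zero_add])

theorem isIdeal_ballWeight (hf : Directed q.ballLE f) (h0 : ⨅ i, ((f i).2 : ℝ≥0∞) = 0) :
    q.IsIdeal (q.ballWeight f) := by
  refine ⟨isWeight_ballWeight, ?_, fun l m hl hm => ?_⟩
  · exact le_antisymm (h0 ▸ le_iInf fun i => iInf_le_of_le _ (ballWeight_le i)) zero_le
  rw [rho_ballWeight (hl.min hm), rho_ballWeight hl, rho_ballWeight hm]
  have hsub : ∀ i, min (l (f i).1) (m (f i).1) - (f i).2 =
      min (l (f i).1 - (f i).2) (m (f i).1 - (f i).2) := fun i =>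
    Monotone.map_min fun _ _ h => tsub_le_tsub_right h _
  simp only [hsub]
  refine le_antisymm (le_min (iSup_mono fun i => min_le_left _ _)
    (iSup_mono fun i => min_le_right _ _)) ?_
  simp only [iSup_inf_eq, inf_iSup_eq]
  refine iSup_le fun i => iSup_le fun j => ?_
  obtain ⟨k, hik, hjk⟩ := hf i j
  exact le_iSup_of_le k (inf_le_inf (hl.tsub_le_of_ballLE hjk) (hm.tsub_le_of_ballLE hik))

theorem boundedWeight_ballWeight (a : X) (r : ℝ≥0) (h : ∀ i, q.d (f i).1 a ≤ r + (f i).2) :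
    q.BoundedWeight (q.ballWeight f) := by
  refine ⟨r, a, fun y => ?_⟩
  rw [ballWeight, ENNReal.add_iInf]
  refine le_iInf fun i => ?_
  calc q.d y a ≤ q.d y (f i).1 + q.d (f i).1 a := q.d_triangle _ _ _
    _ ≤ q.d y (f i).1 + (r + (f i).2) := by gcongr; exact h i
    _ = r + (q.d y (f i).1 + (f i).2) := by ring

end BallWeight

/-- Condition (i) of local Yoneda completeness. -/
def BallLUBRadiusEqInf : Prop :=
  ∀ S : Set (X × ℝ≥0), S.Nonempty → DirectedOn q.ballLE S →
    ∀ (x : X) (r : ℝ≥0), q.IsBallLUB S (x, r) → r = ⨅ p : ↥S, (p : X × ℝ≥0).2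

section LocalYonedaComplete

variable {q} {S : Set (X × ℝ≥0)}

theorem isBallLUB_iInf_of_forall_dist_eq (hS : S.Nonempty) {b : X}
    (hb : ∀ y, q.d b y = ⨆ p : S,
      q.d (p : X × ℝ≥0).1 y - (((p : X × ℝ≥0).2 - ⨅ p : S, (p : X × ℝ≥0).2 : ℝ≥0) : ℝ≥0∞)) :
    q.IsBallLUB S (b, ⨅ p : S, (p : X × ℝ≥0).2) := by
  have := hS.to_subtype
  set r := ⨅ p : S, (p : X × ℝ≥0).2
  have hr : ∀ p : S, r ≤ (p : X × ℝ≥0).2 := fun p => ciInf_le (OrderBot.bddBelow _) p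
  refine ⟨fun p hp => ?_, fun c hc => ?_⟩
  · have h : q.d p.1 b - ((p.2 - r : ℝ≥0) : ℝ≥0∞) ≤ 0 := by
      rw [← q.d_self b, hb b]
      exact le_iSup_of_le ⟨p, hp⟩ le_rfl
    rw [tsub_le_iff_right, zero_add, ENNReal.coe_sub,
      ENNReal.le_sub_iff_add_le_left ENNReal.coe_ne_top (by exact_mod_cast hr ⟨p, hp⟩)] at h
    exact h
  · have hc2 : c.2 ≤ r := le_ciInf fun p => radius_le_of_ballLE (hc p p.2)
    have h : q.d b c.1 ≤ ((r - c.2 : ℝ≥0) : ℝ≥0∞) := by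
      rw [hb]
      refine iSup_le fun p => ?_
      rw [tsub_le_iff_left, ← ENNReal.coe_add, tsub_add_tsub_cancel (hr p) hc2, ENNReal.coe_sub]
      exact ENNReal.le_sub_of_add_le_left ENNReal.coe_ne_top (hc p p.2)
    rwa [ENNReal.coe_sub,
      ENNReal.le_sub_iff_add_le_left ENNReal.coe_ne_top (by exact_mod_cast hc2)] at h

theorem exists_isBallLUB_of_forall_isColimit
    (hcolim : ∀ φ, q.IsIdeal φ → q.BoundedWeight φ → ∃ b, q.IsColimit φ b)
    (hS : S.Nonempty) (hdir : DirectedOn q.ballLE S) {e : X × ℝ≥0}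
    (he : ∀ p ∈ S, q.ballLE p e) :
    ∃ b, q.IsBallLUB S (b, ⨅ p : S, (p : X × ℝ≥0).2) := by
  have := hS.to_subtype
  set r := ⨅ p : S, (p : X × ℝ≥0).2
  have hr : ∀ p : S, r ≤ (p : X × ℝ≥0).2 := fun p => ciInf_le (OrderBot.bddBelow _) p
  set f : S → X × ℝ≥0 := fun p => ((p : X × ℝ≥0).1, (p : X × ℝ≥0).2 - r)
  have hf : Directed q.ballLE f := fun p p' => by
    obtain ⟨k, hk, hpk, hp'k⟩ := hdir p p.2 p' p'.2
    exact ⟨⟨k, hk⟩, ballLE_sub_radius (hr ⟨k, hk⟩) hpk, ballLE_sub_radius (hr ⟨k, hk⟩) hp'k⟩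
  have hbdd : q.BoundedWeight (q.ballWeight f) := by
    refine boundedWeight_ballWeight e.1 r fun p => ?_
    calc q.d (p : X × ℝ≥0).1 e.1 ≤ (p : X × ℝ≥0).2 := le_add_self.trans (he p p.2)
      _ = r + (f p).2 := by rw [← ENNReal.coe_add, add_tsub_cancel_of_le (hr p)]
  obtain ⟨b, hb⟩ :=
    hcolim _ (isIdeal_ballWeight hf (iInf_coe_sub_iInf_eq_zero fun p : S => (p : X × ℝ≥0).2)) hbdd
  exact ⟨b, isBallLUB_iInf_of_forall_dist_eq hS fun y =>
    (hb y).trans (rho_ballWeight (q.isWeight_dist_left y))⟩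

theorem ballLUBRadiusEqInf_of_forall_isColimit
    (hcolim : ∀ φ, q.IsIdeal φ → q.BoundedWeight φ → ∃ b, q.IsColimit φ b) :
    q.BallLUBRadiusEqInf := by
  intro S hS hdir x r hlub
  obtain ⟨b, hb⟩ := exists_isBallLUB_of_forall_isColimit hcolim hS hdir hlub.1
  exact le_antisymm (radius_le_of_ballLE (hb.2 _ hlub.1)) (radius_le_of_ballLE (hlub.2 _ hb.1))

theorem ballLocalDcpo_of_forall_isColimit
    (hcolim : ∀ φ, q.IsIdeal φ → q.BoundedWeight φ → ∃ b, q.IsColimit φ b) :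
    q.BallLocalDcpo := by
  rintro S hS hdir ⟨e, he⟩
  obtain ⟨b, hb⟩ := exists_isBallLUB_of_forall_isColimit hcolim hS hdir he
  exact ⟨_, hb⟩

end LocalYonedaComplete

def ballsAbove (φ : X → ℝ≥0∞) (c : ℝ≥0) : Set (X × ℝ≥0) :=
  {p | φ p.1 + c < p.2}

section ColimitOfBoundedIdeal

variable {q} {φ : X → ℝ≥0∞}

theorem exists_mem_ballsAbove (h0 : ⨅ x, φ x = 0) (c : ℝ≥0) {ε : ℝ≥0} (hε : 0 < ε) :
    ∃ z, (z, c + ε) ∈ ballsAbove φ c := by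
  obtain ⟨z, hz⟩ := iInf_lt_iff.mp (h0.trans_lt (ENNReal.coe_pos.mpr hε))
  refine ⟨z, ?_⟩
  change φ z + c < ((c + ε : ℝ≥0) : ℝ≥0∞)
  rw [ENNReal.coe_add, add_comm (c : ℝ≥0∞)]
  exact ENNReal.add_lt_add_right ENNReal.coe_ne_top hz

theorem iInf_radius_ballsAbove (h0 : ⨅ x, φ x = 0) (c : ℝ≥0) :
    ⨅ p : ballsAbove φ c, (p : X × ℝ≥0).2 = c := by
  obtain ⟨z, hz⟩ := exists_mem_ballsAbove h0 c one_pos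
  have : Nonempty (ballsAbove φ c) := ⟨⟨_, hz⟩⟩
  refine le_antisymm (le_of_forall_pos_le_add fun ε hε => ?_) (le_ciInf fun p => ?_)
  · obtain ⟨z, hz⟩ := exists_mem_ballsAbove h0 c hε
    exact ciInf_le_of_le (OrderBot.bddBelow _) ⟨_, hz⟩ le_rfl
  · have hp : φ (p : X × ℝ≥0).1 + c < (p : X × ℝ≥0).2 := p.2
    exact_mod_cast le_add_self.trans hp.le

theorem forall_ballLE_ballsAbove_iff {c t : ℝ≥0} {y : X} :
    (∀ p ∈ ballsAbove φ c, q.ballLE p (y, t)) ↔ ∀ z, t + q.d z y ≤ c + φ z := by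
  refine ⟨fun h z => le_of_forall_gt_imp_ge_of_dense fun w hw => ?_, fun h p hp => ?_⟩
  · obtain ⟨s, hzs, hsw⟩ := ENNReal.lt_iff_exists_nnreal_btwn.mp hw
    exact (h (z, s) ((add_comm _ _).trans_lt hzs)).trans hsw.le
  · exact (h p.1).trans (add_comm (c : ℝ≥0∞) _ ▸ hp.le)

theorem forall_ballLE_ballsAbove_self_iff {c : ℝ≥0} {b : X} :
    (∀ p ∈ ballsAbove φ c, q.ballLE p (b, c)) ↔ ∀ z, q.d z b ≤ φ z := by
  simp only [forall_ballLE_ballsAbove_iff, ENNReal.add_le_add_iff_left ENNReal.coe_ne_top]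

theorem IsIdeal.exists_lt_min (hφ : q.IsIdeal φ) {l m : X → ℝ≥0∞} (hl : q.IsWeight l)
    (hm : q.IsWeight m) {x y : X} (hx : φ x < l x) (hy : φ y < m y) :
    ∃ z, φ z < min (l z) (m z) := by
  have hpos : 0 < rho φ fun z => min (l z) (m z) := by
    rw [hφ.2.2 l m hl hm]
    exact lt_min ((tsub_pos_of_lt hx).trans_le (le_iSup (fun z => l z - φ z) x))
      ((tsub_pos_of_lt hy).trans_le (le_iSup (fun z => m z - φ z) y))
  obtain ⟨z, hz⟩ := lt_iSup_iff.mp hpos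
  exact ⟨z, tsub_pos_iff_lt.mp hz⟩

theorem directedOn_ballsAbove (hφ : q.IsIdeal φ) (c : ℝ≥0) :
    DirectedOn q.ballLE (ballsAbove φ c) := by
  rintro ⟨x, r⟩ hx ⟨y, s⟩ hy
  have key : ∀ {a w : X} {R : ℝ≥0},
      φ w < ((R : ℝ≥0∞) - c) - q.d a w ↔ φ w + c < R - q.d a w := by
    intro a w R
    rw [lt_tsub_iff_right, lt_tsub_iff_right, lt_tsub_iff_right, add_right_comm]
  obtain ⟨z, hz⟩ := hφ.exists_lt_min (q.isWeight_tsub_dist x (r - c))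
    (q.isWeight_tsub_dist y (s - c)) (key.mpr (by rwa [q.d_self, tsub_zero]))
    (key.mpr (by rwa [q.d_self, tsub_zero]))
  rw [lt_min_iff, key, key, ← lt_min_iff] at hz
  obtain ⟨t, hzt, ht⟩ := ENNReal.lt_iff_exists_nnreal_btwn.mp hz
  rw [lt_min_iff, lt_tsub_iff_right, lt_tsub_iff_right] at ht
  exact ⟨(z, t), hzt, ht.1.le, ht.2.le⟩

theorem exists_isBallLUB_ballsAbove (hrad : q.BallLUBRadiusEqInf) (hloc : q.BallLocalDcpo)
    (hφ : q.IsIdeal φ) {r₀ : ℝ≥0} {a : X} (ha : ∀ x, q.d x a ≤ r₀ + φ x) {c : ℝ≥0}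
    (hc : r₀ ≤ c) : ∃ b, q.IsBallLUB (ballsAbove φ c) (b, c) := by
  obtain ⟨z, hz⟩ := exists_mem_ballsAbove hφ.2.1 c one_pos
  have hdir := directedOn_ballsAbove hφ c
  have hub : ∀ p ∈ ballsAbove φ c, q.ballLE p (a, 0) :=
    forall_ballLE_ballsAbove_iff.mpr fun z => by
      rw [ENNReal.coe_zero, zero_add]
      exact (ha z).trans (by gcongr)
  obtain ⟨⟨b, t⟩, hb⟩ := hloc _ ⟨_, hz⟩ hdir ⟨_, hub⟩
  obtain rfl : t = c := (hrad _ ⟨_, hz⟩ hdir b t hb).trans (iInf_radius_ballsAbove hφ.2.1 c)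
  exact ⟨b, hb⟩

theorem exists_isColimit_of_ballLUBRadiusEqInf (hrad : q.BallLUBRadiusEqInf)
    (hloc : q.BallLocalDcpo) (hφ : q.IsIdeal φ) (hbdd : q.BoundedWeight φ) :
    ∃ b, q.IsColimit φ b := by
  obtain ⟨r₀, a, ha⟩ := hbdd
  obtain ⟨b, hb⟩ := exists_isBallLUB_ballsAbove hrad hloc hφ ha le_rfl
  refine ⟨b, fun y => le_antisymm ?_ (iSup_le fun x => ?_)⟩
  · set δ := ⨆ x, q.d x y - φ x
    obtain hδ | hδ := eq_or_ne δ ∞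
    · exact hδ ▸ le_top
    obtain ⟨b', hb'⟩ :=
      exists_isBallLUB_ballsAbove hrad hloc hφ ha (le_self_add : r₀ ≤ r₀ + δ.toNNReal)
    have hbb' : q.d b b' = 0 := by
      have h : q.ballLE (b, r₀) (b', r₀) := hb.2 _ (forall_ballLE_ballsAbove_self_iff.mpr
        (forall_ballLE_ballsAbove_self_iff.mp hb'.1))
      exact nonpos_iff_eq_zero.mp <| (ENNReal.add_le_add_iff_left ENNReal.coe_ne_top).mp <|
        le_of_le_of_eq h (add_zero _).symm
    have hb'y : q.d b' y ≤ δ := by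
      have h : (r₀ : ℝ≥0∞) + q.d b' y ≤ (r₀ + δ.toNNReal : ℝ≥0) :=
        hb'.2 (y, r₀) (forall_ballLE_ballsAbove_iff.mpr fun z => ?_)
      · rw [ENNReal.coe_add, ENNReal.coe_toNNReal hδ] at h
        exact (ENNReal.add_le_add_iff_left ENNReal.coe_ne_top).mp h
      · rw [ENNReal.coe_add, ENNReal.coe_toNNReal hδ, add_assoc]
        gcongr
        exact tsub_le_iff_right.mp (le_iSup (fun x => q.d x y - φ x) z)
    calc q.d b y ≤ q.d b b' + q.d b' y := q.d_triangle _ _ _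
      _ ≤ δ := by rw [hbb', zero_add]; exact hb'y
  · rw [tsub_le_iff_right, add_comm]
    calc q.d x y ≤ q.d x b + q.d b y := q.d_triangle _ _ _
      _ ≤ φ x + q.d b y := by gcongr; exact forall_ballLE_ballsAbove_self_iff.mp hb.1 x

end ColimitOfBoundedIdeal

end QuasiMetric

open QuasiMetric in
/-- every bounded ideal of `(X, d)` has a colimit iff `(X, d)` is local
Yoneda complete: (i) whenever `(x, r)` is a least upper bound of a directed set of formal
balls, `r` is the infimum of the radii, and (ii) `BX` is a local dcpo. -/
theorem stmt16 {X : Type u} (q : QuasiMetric X) :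
    (∀ φ : X → ℝ≥0∞, q.IsIdeal φ → q.BoundedWeight φ → ∃ b, q.IsColimit φ b) ↔
      ((∀ S : Set (X × ℝ≥0), S.Nonempty → DirectedOn q.ballLE S →
          ∀ (x : X) (r : ℝ≥0), q.IsBallLUB S (x, r) → r = ⨅ p : ↥S, (p : X × ℝ≥0).2) ∧
        q.BallLocalDcpo) := by
  refine ⟨fun hcolim => ?_, fun ⟨hrad, hloc⟩ _ hφ hbdd => ?_⟩
  · exact ⟨ballLUBRadiusEqInf_of_forall_isColimit hcolim,
      ballLocalDcpo_of_forall_isColimit hcolim⟩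
  · exact exists_isColimit_of_ballLUBRadiusEqInf hrad hloc hφ hbdd
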